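/- arXiv:1812.11498 — 7 statements merged into one kernel-verified Lean document; each statement's English description precedes it below -/
import Mathlib

section
/- Let p ∈ ℝ[t] be squarefree and let a11, a12, b11, b12, a21, a22, b21, b22 ∈ ℝ[t] satisfy gcd(a11, a12, b11, b12) = 1 and gcd(a21, a22, b21, b22) = 1. For t₀ ∈ ℂ, the linear polynomial (t − t₀) divides both Ξ1 (in ℂ[t,x]) and Ξ2 (in ℂ[t,x,y]) if and only if t₀ corresponds to a base point of the map on the Weierstrass curve, i.e., there exists s₀ ∈ ℂ with s₀² = p(t₀) and A1(t₀,s₀) = B1(t₀,s₀) = A2(t₀,s₀) = B2(t₀,s₀) = 0. -/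
/-- Complexification of a real polynomial. -/
noncomputable def cpoly (q : Polynomial ℝ) : Polynomial ℂ :=
  q.map (algebraMap ℝ ℂ)

/-- `Ξ1(t,x) = (x·b11(t) − a11(t))² − p(t)·(x·b12(t) − a12(t))²`, regarded as an
element of `ℂ[t][x]` (outer variable `x`, inner variable `t`). -/
noncomputable def Xi1C (a11 a12 b11 b12 p : Polynomial ℝ) :
    Polynomial (Polynomial ℂ) :=
  (Polynomial.X * Polynomial.C (cpoly b11) - Polynomial.C (cpoly a11)) ^ 2 -
    Polynomial.C (cpoly p) *
      (Polynomial.X * Polynomial.C (cpoly b12) - Polynomial.C (cpoly a12)) ^ 2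

/-- The inclusion `ℝ[t] → ℂ[t,x,y]`, with `ℂ[t,x,y]` realized as
`MvPolynomial (Fin 3) ℂ` (variables `0 = t`, `1 = x`, `2 = y`). -/
noncomputable def toTXYC (q : Polynomial ℝ) : MvPolynomial (Fin 3) ℂ :=
  Polynomial.aeval (MvPolynomial.X 0) (cpoly q)

/-- `Ξ2(t,x,y) = (a22·b11 − a21·b12)(t)·x + (a11·b22 − a12·b21)(t)·y
+ (b12·b21 − b11·b22)(t)·x·y − (a11·a22 − a12·a21)(t)`, as an element of `ℂ[t,x,y]`. -/
noncomputable def Xi2C (a11 a12 b11 b12 a21 a22 b21 b22 : Polynomial ℝ) :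
    MvPolynomial (Fin 3) ℂ :=
  toTXYC (a22 * b11 - a21 * b12) * MvPolynomial.X 1 +
    toTXYC (a11 * b22 - a12 * b21) * MvPolynomial.X 2 +
    toTXYC (b12 * b21 - b11 * b22) * (MvPolynomial.X 1 * MvPolynomial.X 2) -
    toTXYC (a11 * a22 - a12 * a21)


/-!
Write `α₁, α₂, β₁, β₂, γ₁, γ₂, δ₁, δ₂, π` for the values at `t₀` of
`a11, a12, b11, b12, a21, a22, b21, b22, p`. Divisibility by `t − t₀` means that `Ξ1` and `Ξ2`
vanish identically once `t = t₀`. For `Ξ1` this says `α₁² = πα₂²`, `α₁β₁ = πα₂β₂`, `β₁² = πβ₂²`;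
then `(α₁β₂ − α₂β₁)² = 0`, and since the gcd condition keeps `(α₁, α₂, β₁, β₂) ≠ 0` there is a
common root `s` of `α₁ + sα₂` and `β₁ + sβ₂` with `s² = π`. The coefficients of `Ξ2` are the
minors pairing `(γ₁, γ₂)` and `(δ₁, δ₂)` with `(α₁, α₂)` and `(β₁, β₂)`; given `s`, each of them
is `−α₂` or `±β₂` times `γ₁ + sγ₂` or `δ₁ + sδ₂`, so they vanish exactly when `A2` and `B2` do.
-/

open Polynomial

theorem Ideal.span_eq_top_of_forall_dvd_isUnit {R : Type*} [CommRing R] [IsPrincipalIdealRing R]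
    {s : Set R} (h : ∀ d, (∀ x ∈ s, d ∣ x) → IsUnit d) : Ideal.span s = ⊤ := by
  obtain ⟨g, hg⟩ := Submodule.IsPrincipal.principal (Ideal.span s)
  rw [hg, Ideal.submodule_span_eq, Ideal.span_singleton_eq_top]
  refine h g fun x hx => Ideal.mem_span_singleton.mp ?_
  rw [← Ideal.submodule_span_eq, ← hg]
  exact Ideal.subset_span hx

theorem RingHom.exists_apply_ne_zero_of_span_eq_top {R S : Type*} [CommSemiring R] [Semiring S]
    [Nontrivial S] (f : R →+* S) {s : Set R} (hs : Ideal.span s = ⊤) : ∃ x ∈ s, f x ≠ 0 := by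
  by_contra! h
  have hker : Ideal.span s ≤ RingHom.ker f := Ideal.span_le.mpr h
  rw [hs, top_le_iff] at hker
  have h1 : (1 : R) ∈ RingHom.ker f := hker ▸ Submodule.mem_top
  simp at h1

theorem C_X_sub_C_dvd_iff_map_evalRingHom_eq_zero {R : Type*} [CommRing R] (a : R) (F : R[X][X]) :
    C (X - C a) ∣ F ↔ F.map (evalRingHom a) = 0 := by
  simp only [C_dvd_iff_dvd_coeff, dvd_iff_isRoot, Polynomial.ext_iff, coeff_map, coeff_zero,
    coe_evalRingHom, IsRoot.def]

section Quadric

variable {K : Type*} [Field K] {α₁ α₂ β₁ β₂ γ₁ γ₂ δ₁ δ₂ π s : K}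

theorem sq_sub_mul_sq_eq_zero_iff [NeZero (2 : K)] :
    (X * C β₁ - C α₁) ^ 2 - C π * (X * C β₂ - C α₂) ^ 2 = 0 ↔
      α₁ ^ 2 = π * α₂ ^ 2 ∧ α₁ * β₁ = π * (α₂ * β₂) ∧ β₁ ^ 2 = π * β₂ ^ 2 := by
  constructor
  · intro h
    have E : ∀ x : K, (β₁ * x - α₁) ^ 2 - π * (β₂ * x - α₂) ^ 2 = 0 := fun x => by
      simpa using congrArg (eval x) h
    have h2 : (2 : K) ≠ 0 := two_ne_zero
    refine ⟨by linear_combination E 0, mul_left_cancel₀ (mul_ne_zero h2 h2) ?_,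
      mul_left_cancel₀ h2 ?_⟩
    · linear_combination E (-1) - E 1
    · linear_combination E 1 + E (-1) - 2 * E 0
  · rintro ⟨e₀, e₁, e₂⟩
    have hexpand : (X * C β₁ - C α₁) ^ 2 - C π * (X * C β₂ - C α₂) ^ 2 =
        C (β₁ ^ 2 - π * β₂ ^ 2) * X ^ 2 - C (2 * (α₁ * β₁ - π * (α₂ * β₂))) * X +
          C (α₁ ^ 2 - π * α₂ ^ 2) := by
      simp only [map_sub, map_mul, map_pow, map_ofNat]; ring
    rw [hexpand, e₀, e₁, e₂]; simp

theorem exists_common_root_of_ne_zero (hβ₂ : β₂ ≠ 0) (e₂ : β₁ ^ 2 = π * β₂ ^ 2)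
    (hdet : α₁ * β₂ = α₂ * β₁) : ∃ s, s ^ 2 = π ∧ α₁ + s * α₂ = 0 ∧ β₁ + s * β₂ = 0 := by
  refine ⟨-β₁ / β₂, ?_, ?_, ?_⟩ <;> field_simp
  · linear_combination e₂
  · linear_combination hdet
  · ring

theorem sq_eq_mul_sq_iff_exists_common_root (hnd : α₁ ≠ 0 ∨ α₂ ≠ 0 ∨ β₁ ≠ 0 ∨ β₂ ≠ 0) :
    (α₁ ^ 2 = π * α₂ ^ 2 ∧ α₁ * β₁ = π * (α₂ * β₂) ∧ β₁ ^ 2 = π * β₂ ^ 2) ↔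
      ∃ s, s ^ 2 = π ∧ α₁ + s * α₂ = 0 ∧ β₁ + s * β₂ = 0 := by
  constructor
  · rintro ⟨e₀, e₁, e₂⟩
    have hdet : α₁ * β₂ = α₂ * β₁ := by
      have : (α₁ * β₂ - α₂ * β₁) ^ 2 = 0 := by
        linear_combination β₂ ^ 2 * e₀ - 2 * α₂ * β₂ * e₁ + α₂ ^ 2 * e₂
      exact sub_eq_zero.mp (pow_eq_zero_iff two_ne_zero |>.mp this)
    by_cases hβ₂ : β₂ = 0
    · have hα₂ : α₂ ≠ 0 := by
        rintro rfl
        simp_all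
      obtain ⟨s, hs, hβ, hα⟩ := exists_common_root_of_ne_zero (α₁ := β₁) (α₂ := β₂) hα₂ e₀
        (by linear_combination -hdet)
      exact ⟨s, hs, hα, hβ⟩
    · exact exists_common_root_of_ne_zero hβ₂ e₂ hdet
  · rintro ⟨s, hs, hα, hβ⟩
    rw [← hs, eq_neg_of_add_eq_zero_left hα, eq_neg_of_add_eq_zero_left hβ]
    refine ⟨?_, ?_, ?_⟩ <;> ring

theorem add_mul_eq_zero_iff_of_add_mul_eq_zero (hα : α₁ + s * α₂ = 0) (hβ : β₁ + s * β₂ = 0)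
    (hne : α₂ ≠ 0 ∨ β₂ ≠ 0) :
    γ₁ + s * γ₂ = 0 ↔ α₁ * γ₂ - α₂ * γ₁ = 0 ∧ β₁ * γ₂ - β₂ * γ₁ = 0 := by
  rw [eq_neg_of_add_eq_zero_left hα, eq_neg_of_add_eq_zero_left hβ]
  have hα' : -(s * α₂) * γ₂ - α₂ * γ₁ = -α₂ * (γ₁ + s * γ₂) := by ring
  have hβ' : -(s * β₂) * γ₂ - β₂ * γ₁ = -β₂ * (γ₁ + s * γ₂) := by ring
  rw [hα', hβ']
  constructor
  · intro h; simp [h]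
  · rintro ⟨h₁, h₂⟩
    rcases hne with h | h <;> simp_all

theorem exists_base_point_iff (hnd : α₁ ≠ 0 ∨ α₂ ≠ 0 ∨ β₁ ≠ 0 ∨ β₂ ≠ 0) :
    ((α₁ ^ 2 = π * α₂ ^ 2 ∧ α₁ * β₁ = π * (α₂ * β₂) ∧ β₁ ^ 2 = π * β₂ ^ 2) ∧
        γ₂ * β₁ - γ₁ * β₂ = 0 ∧ α₁ * δ₂ - α₂ * δ₁ = 0 ∧ β₂ * δ₁ - β₁ * δ₂ = 0 ∧
          α₁ * γ₂ - α₂ * γ₁ = 0) ↔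
      ∃ s, s ^ 2 = π ∧ α₁ + s * α₂ = 0 ∧ β₁ + s * β₂ = 0 ∧ γ₁ + s * γ₂ = 0 ∧
        δ₁ + s * δ₂ = 0 := by
  rw [sq_eq_mul_sq_iff_exists_common_root hnd]
  have hne {s : K} (hα : α₁ + s * α₂ = 0) (hβ : β₁ + s * β₂ = 0) : α₂ ≠ 0 ∨ β₂ ≠ 0 := by
    by_contra! h
    simp_all
  constructor
  · rintro ⟨⟨s, hs, hα, hβ⟩, h₁, h₂, h₃, h₄⟩
    have hγ := (add_mul_eq_zero_iff_of_add_mul_eq_zero hα hβ (hne hα hβ)).2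
      ⟨h₄, by linear_combination h₁⟩
    have hδ := (add_mul_eq_zero_iff_of_add_mul_eq_zero hα hβ (hne hα hβ)).2
      ⟨h₂, by linear_combination -h₃⟩
    exact ⟨s, hs, hα, hβ, hγ, hδ⟩
  · rintro ⟨s, hs, hα, hβ, hγ, hδ⟩
    obtain ⟨h₄, h₁⟩ := (add_mul_eq_zero_iff_of_add_mul_eq_zero hα hβ (hne hα hβ)).1 hγ
    obtain ⟨h₂, h₃⟩ := (add_mul_eq_zero_iff_of_add_mul_eq_zero hα hβ (hne hα hβ)).1 hδ
    exact ⟨⟨s, hs, hα, hβ⟩, by linear_combination h₁, h₂, by linear_combination -h₃, h₄⟩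

end Quadric

theorem Xi1C_map_evalRingHom (a11 a12 b11 b12 p : ℝ[X]) (t₀ : ℂ) :
    (Xi1C a11 a12 b11 b12 p).map (evalRingHom t₀) =
      (X * C (aeval t₀ b11) - C (aeval t₀ a11)) ^ 2 -
        C (aeval t₀ p) * (X * C (aeval t₀ b12) - C (aeval t₀ a12)) ^ 2 := by
  simp [Xi1C, cpoly, eval_map_algebraMap]

theorem eval_toTXYC (q : ℝ[X]) (v : Fin 3 → ℂ) :
    MvPolynomial.eval v (toTXYC q) = aeval (v 0) q := by
  change MvPolynomial.aeval v (aeval (MvPolynomial.X 0) (cpoly q)) = _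
  rw [← aeval_algHom_apply, MvPolynomial.aeval_X, cpoly, aeval_map_algebraMap]

theorem X_zero_sub_C_dvd_toTXYC {q : ℝ[X]} {t₀ : ℂ} (h : aeval t₀ q = 0) :
    MvPolynomial.X 0 - MvPolynomial.C t₀ ∣ toTXYC q := by
  have h1 : X - C t₀ ∣ cpoly q := dvd_iff_isRoot.mpr (by simpa [cpoly, eval_map_algebraMap])
  simpa [toTXYC] using map_dvd (aeval (MvPolynomial.X 0 : MvPolynomial (Fin 3) ℂ)) h1

theorem X_zero_sub_C_dvd_bilinear_iff (c₁ c₂ c₃ c₄ : ℝ[X]) (t₀ : ℂ) :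
    MvPolynomial.X 0 - MvPolynomial.C t₀ ∣
        toTXYC c₁ * MvPolynomial.X 1 + toTXYC c₂ * MvPolynomial.X 2 +
          toTXYC c₃ * (MvPolynomial.X 1 * MvPolynomial.X 2) - toTXYC c₄ ↔
      aeval t₀ c₁ = 0 ∧ aeval t₀ c₂ = 0 ∧ aeval t₀ c₃ = 0 ∧ aeval t₀ c₄ = 0 := by
  constructor
  · rintro ⟨r, hr⟩
    have G (x y : ℂ) :
        aeval t₀ c₁ * x + aeval t₀ c₂ * y + aeval t₀ c₃ * (x * y) - aeval t₀ c₄ = 0 := by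
      simpa [eval_toTXYC] using congrArg (MvPolynomial.eval ![t₀, x, y]) hr
    refine ⟨?_, ?_, ?_, ?_⟩
    · linear_combination G 1 0 - G 0 0
    · linear_combination G 0 1 - G 0 0
    · linear_combination G 1 1 - G 1 0 - G 0 1 + G 0 0
    · linear_combination -G 0 0
  · rintro ⟨h₁, h₂, h₃, h₄⟩
    exact (((X_zero_sub_C_dvd_toTXYC h₁).mul_right _).add
      ((X_zero_sub_C_dvd_toTXYC h₂).mul_right _)).add
      ((X_zero_sub_C_dvd_toTXYC h₃).mul_right _) |>.sub (X_zero_sub_C_dvd_toTXYC h₄)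

theorem t_factor_iff_base_point_general (a11 a12 b11 b12 a21 a22 b21 b22 p : Polynomial ℝ)
    (hgcd1 : ∀ d : Polynomial ℝ, d ∣ a11 → d ∣ a12 → d ∣ b11 → d ∣ b12 → IsUnit d)
    (t₀ : ℂ) :
    (Polynomial.C (Polynomial.X - Polynomial.C t₀) ∣ Xi1C a11 a12 b11 b12 p ∧
        (MvPolynomial.X 0 - MvPolynomial.C t₀) ∣
          Xi2C a11 a12 b11 b12 a21 a22 b21 b22) ↔
      ∃ s₀ : ℂ, s₀ ^ 2 = (cpoly p).eval t₀ ∧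
        (cpoly a11).eval t₀ + s₀ * (cpoly a12).eval t₀ = 0 ∧
        (cpoly b11).eval t₀ + s₀ * (cpoly b12).eval t₀ = 0 ∧
        (cpoly a21).eval t₀ + s₀ * (cpoly a22).eval t₀ = 0 ∧
        (cpoly b21).eval t₀ + s₀ * (cpoly b22).eval t₀ = 0 := by
  have hspan := Ideal.span_eq_top_of_forall_dvd_isUnit (s := {a11, a12, b11, b12})
    (by simpa using hgcd1)
  have hnd := (aeval t₀ : ℝ[X] →ₐ[ℝ] ℂ).toRingHom.exists_apply_ne_zero_of_span_eq_top hspan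
  simp only [Set.mem_insert_iff, Set.mem_singleton_iff, exists_eq_or_imp, exists_eq_left] at hnd
  rw [C_X_sub_C_dvd_iff_map_evalRingHom_eq_zero, Xi1C_map_evalRingHom, sq_sub_mul_sq_eq_zero_iff,
    Xi2C, X_zero_sub_C_dvd_bilinear_iff]
  simp only [cpoly, eval_map_algebraMap, map_sub, map_mul]
  exact exists_base_point_iff hnd

/-- `(t − t₀)` divides both `Ξ1` (in `ℂ[t,x]`) and `Ξ2` (in `ℂ[t,x,y]`) iff `t₀`
corresponds to a base point of the map on the Weierstrass curve, i.e. there is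
`s₀ ∈ ℂ` with `s₀² = p(t₀)` and `A1 = B1 = A2 = B2 = 0` at `(t₀,s₀)`. -/
theorem t_factor_iff_base_point (a11 a12 b11 b12 a21 a22 b21 b22 p : Polynomial ℝ)
    (hp : Squarefree p)
    (hgcd1 : ∀ d : Polynomial ℝ, d ∣ a11 → d ∣ a12 → d ∣ b11 → d ∣ b12 → IsUnit d)
    (hgcd2 : ∀ d : Polynomial ℝ, d ∣ a21 → d ∣ a22 → d ∣ b21 → d ∣ b22 → IsUnit d)
    (t₀ : ℂ) :
    (Polynomial.C (Polynomial.X - Polynomial.C t₀) ∣ Xi1C a11 a12 b11 b12 p ∧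
        (MvPolynomial.X 0 - MvPolynomial.C t₀) ∣
          Xi2C a11 a12 b11 b12 a21 a22 b21 b22) ↔
      ∃ s₀ : ℂ, s₀ ^ 2 = (cpoly p).eval t₀ ∧
        (cpoly a11).eval t₀ + s₀ * (cpoly a12).eval t₀ = 0 ∧
        (cpoly b11).eval t₀ + s₀ * (cpoly b12).eval t₀ = 0 ∧
        (cpoly a21).eval t₀ + s₀ * (cpoly a22).eval t₀ = 0 ∧
        (cpoly b21).eval t₀ + s₀ * (cpoly b22).eval t₀ = 0 :=
  t_factor_iff_base_point_general a11 a12 b11 b12 a21 a22 b21 b22 p hgcd1 t₀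
end

section
/- Let p ∈ ℝ[t] and let (t₀,s₀) ∈ ℝ² satisfy s₀² = p(t₀), B1(t₀,s₀) ≠ 0 and B2(t₀,s₀) ≠ 0, and set x₀ = A1(t₀,s₀)/B1(t₀,s₀) and y₀ = A2(t₀,s₀)/B2(t₀,s₀). Then Ξ1(t₀, x₀) = 0 and Ξ2(t₀, x₀, y₀) = 0; that is, the parameter t₀ of any point of the image curve is a common root of the univariate polynomials Ξ1(·, x₀) and Ξ2(·, x₀, y₀). -/
open Polynomial

/-- If `(t₀,s₀)` lies on the Weierstrass curve `s² = p(t)`, the denominators `B1, B2`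
do not vanish at `(t₀,s₀)`, and `x₀ = A1(t₀,s₀)/B1(t₀,s₀)`, `y₀ = A2(t₀,s₀)/B2(t₀,s₀)`,
then `Ξ1(t₀,x₀) = 0` and `Ξ2(t₀,x₀,y₀) = 0`: the parameter `t₀` of any point of the
image curve is a common root of `Ξ1(·,x₀)` and `Ξ2(·,x₀,y₀)`. -/
theorem xi_vanish_at_image_point (a11 a12 b11 b12 a21 a22 b21 b22 p : Polynomial ℝ)
    (t₀ s₀ : ℝ) (hcurve : s₀ ^ 2 = p.eval t₀)
    (hB1 : b11.eval t₀ + s₀ * b12.eval t₀ ≠ 0)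
    (hB2 : b21.eval t₀ + s₀ * b22.eval t₀ ≠ 0)
    (x₀ y₀ : ℝ)
    (hx₀ : x₀ = (a11.eval t₀ + s₀ * a12.eval t₀) / (b11.eval t₀ + s₀ * b12.eval t₀))
    (hy₀ : y₀ = (a21.eval t₀ + s₀ * a22.eval t₀) / (b21.eval t₀ + s₀ * b22.eval t₀)) :
    (x₀ * b11.eval t₀ - a11.eval t₀) ^ 2 -
        p.eval t₀ * (x₀ * b12.eval t₀ - a12.eval t₀) ^ 2 = 0 ∧
      (a22 * b11 - a21 * b12).eval t₀ * x₀ +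
          (a11 * b22 - a12 * b21).eval t₀ * y₀ +
          (b12 * b21 - b11 * b22).eval t₀ * (x₀ * y₀) -
          (a11 * a22 - a12 * a21).eval t₀ = 0 := by
  have h1 : x₀ * (b11.eval t₀ + s₀ * b12.eval t₀) = a11.eval t₀ + s₀ * a12.eval t₀ := by
    rw [hx₀]; field_simp
  have h2 : y₀ * (b21.eval t₀ + s₀ * b22.eval t₀) = a21.eval t₀ + s₀ * a22.eval t₀ := by
    rw [hy₀]; field_simp
  constructor
  · linear_combination
      ((x₀ * b11.eval t₀ - a11.eval t₀) - s₀ * (x₀ * b12.eval t₀ - a12.eval t₀)) * h1 +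
      (x₀ * b12.eval t₀ - a12.eval t₀) ^ 2 * hcurve
  · simp only [eval_sub, eval_mul]
    linear_combination
      (-(y₀ * b22.eval t₀ - a22.eval t₀)) * h1 + (x₀ * b12.eval t₀ - a12.eval t₀) * h2
end

section
/- Let p ∈ ℝ[t] and let (t₁,s₁), (t₂,s₂) ∈ ℝ² be two points with s₁² = p(t₁), s₂² = p(t₂), t₁ ≠ t₂, B1 and B2 nonvanishing at both points, and suppose the two points have the same image: x(t₁,s₁) = x(t₂,s₂) = x₀ and y(t₁,s₁) = y(t₂,s₂) = y₀ (a self-intersection of the image curve). Then (t − t₁)·(t − t₂) divides both Ξ1(t, x₀) and Ξ2(t, x₀, y₀) in ℝ[t]; in particular, if neither of these univariate polynomials is identically zero, their greatest common divisor in ℝ[t] has degree at least 2. -/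
open Polynomial

/-- `Ξ1(t, x₀)` as a univariate polynomial in `t`. -/
noncomputable def Xi1Spec (a11 a12 b11 b12 p : Polynomial ℝ) (x₀ : ℝ) : Polynomial ℝ :=
  (C x₀ * b11 - a11) ^ 2 - p * (C x₀ * b12 - a12) ^ 2

/-- `Ξ2(t, x₀, y₀)` as a univariate polynomial in `t`. -/
noncomputable def Xi2Spec (a11 a12 b11 b12 a21 a22 b21 b22 : Polynomial ℝ)
    (x₀ y₀ : ℝ) : Polynomial ℝ :=
  C x₀ * (a22 * b11 - a21 * b12) + C y₀ * (a11 * b22 - a12 * b21) +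
    C (x₀ * y₀) * (b12 * b21 - b11 * b22) - (a11 * a22 - a12 * a21)

/-- If two distinct parameters `(t₁,s₁) ≠ (t₂,s₂)` (with `t₁ ≠ t₂`) on the Weierstrass
curve have the same image `(x₀,y₀)` (a self-intersection), then `(t − t₁)(t − t₂)`
divides both `Ξ1(t,x₀)` and `Ξ2(t,x₀,y₀)` in `ℝ[t]`; in particular, if neither of
these univariate polynomials is zero, their gcd has degree at least 2. -/
theorem self_intersection_gcd (a11 a12 b11 b12 a21 a22 b21 b22 p : Polynomial ℝ)
    (t₁ s₁ t₂ s₂ x₀ y₀ : ℝ)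
    (hc1 : s₁ ^ 2 = p.eval t₁) (hc2 : s₂ ^ 2 = p.eval t₂) (ht : t₁ ≠ t₂)
    (hB11 : b11.eval t₁ + s₁ * b12.eval t₁ ≠ 0)
    (hB21 : b21.eval t₁ + s₁ * b22.eval t₁ ≠ 0)
    (hB12 : b11.eval t₂ + s₂ * b12.eval t₂ ≠ 0)
    (hB22 : b21.eval t₂ + s₂ * b22.eval t₂ ≠ 0)
    (hx1 : (a11.eval t₁ + s₁ * a12.eval t₁) / (b11.eval t₁ + s₁ * b12.eval t₁) = x₀)
    (hx2 : (a11.eval t₂ + s₂ * a12.eval t₂) / (b11.eval t₂ + s₂ * b12.eval t₂) = x₀)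
    (hy1 : (a21.eval t₁ + s₁ * a22.eval t₁) / (b21.eval t₁ + s₁ * b22.eval t₁) = y₀)
    (hy2 : (a21.eval t₂ + s₂ * a22.eval t₂) / (b21.eval t₂ + s₂ * b22.eval t₂) = y₀) :
    (X - C t₁) * (X - C t₂) ∣ Xi1Spec a11 a12 b11 b12 p x₀ ∧
      (X - C t₁) * (X - C t₂) ∣ Xi2Spec a11 a12 b11 b12 a21 a22 b21 b22 x₀ y₀ ∧
      (Xi1Spec a11 a12 b11 b12 p x₀ ≠ 0 →
        Xi2Spec a11 a12 b11 b12 a21 a22 b21 b22 x₀ y₀ ≠ 0 →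
        2 ≤ (EuclideanDomain.gcd (Xi1Spec a11 a12 b11 b12 p x₀)
              (Xi2Spec a11 a12 b11 b12 a21 a22 b21 b22 x₀ y₀)).natDegree) := by
  have hcop : IsCoprime (X - C t₁ : Polynomial ℝ) (X - C t₂) :=
    isCoprime_X_sub_C_of_isUnit_sub (sub_ne_zero.mpr ht).isUnit
  rw [div_eq_iff hB11] at hx1
  rw [div_eq_iff hB12] at hx2
  rw [div_eq_iff hB21] at hy1
  rw [div_eq_iff hB22] at hy2
  have h1 : (X - C t₁) * (X - C t₂) ∣ Xi1Spec a11 a12 b11 b12 p x₀ := by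
    apply hcop.mul_dvd <;> rw [dvd_iff_isRoot] <;> simp only [IsRoot, Xi1Spec, eval_sub,
      eval_pow, eval_mul, eval_C]
    · linear_combination (s₁ * (x₀ * b12.eval t₁ - a12.eval t₁)
        - (x₀ * b11.eval t₁ - a11.eval t₁)) * hx1 + (x₀ * b12.eval t₁ - a12.eval t₁) ^ 2 * hc1
    · linear_combination (s₂ * (x₀ * b12.eval t₂ - a12.eval t₂)
        - (x₀ * b11.eval t₂ - a11.eval t₂)) * hx2 + (x₀ * b12.eval t₂ - a12.eval t₂) ^ 2 * hc2
  have h2 : (X - C t₁) * (X - C t₂) ∣ Xi2Spec a11 a12 b11 b12 a21 a22 b21 b22 x₀ y₀ := by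
    apply hcop.mul_dvd <;> rw [dvd_iff_isRoot] <;> simp only [IsRoot, Xi2Spec, eval_sub,
      eval_add, eval_mul, eval_C]
    · linear_combination (y₀ * b22.eval t₁ - a22.eval t₁) * hx1
        - (x₀ * b12.eval t₁ - a12.eval t₁) * hy1
    · linear_combination (y₀ * b22.eval t₂ - a22.eval t₂) * hx2
        - (x₀ * b12.eval t₂ - a12.eval t₂) * hy2
  refine ⟨h1, h2, fun hne1 hne2 => ?_⟩
  have hgcd : (X - C t₁) * (X - C t₂) ∣
      EuclideanDomain.gcd (Xi1Spec a11 a12 b11 b12 p x₀)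
        (Xi2Spec a11 a12 b11 b12 a21 a22 b21 b22 x₀ y₀) :=
    EuclideanDomain.dvd_gcd h1 h2
  have hgne : EuclideanDomain.gcd (Xi1Spec a11 a12 b11 b12 p x₀)
      (Xi2Spec a11 a12 b11 b12 a21 a22 b21 b22 x₀ y₀) ≠ 0 := fun h => by
    exact hne1 (zero_dvd_iff.mp (h ▸ EuclideanDomain.gcd_dvd_left _ _))
  have := Polynomial.natDegree_le_of_dvd hgcd hgne
  have hdeg : ((X - C t₁) * (X - C t₂) : Polynomial ℝ).natDegree = 2 := by
    rw [natDegree_mul (X_sub_C_ne_zero t₁) (X_sub_C_ne_zero t₂), natDegree_X_sub_C,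
      natDegree_X_sub_C]
  omega
end

section
/- Let p ∈ ℝ[t] be squarefree and let (t₀,s₀) ∈ ℝ² satisfy s₀² = p(t₀), B1(t₀,s₀) ≠ 0 and B2(t₀,s₀) ≠ 0, and set x₀ = x(t₀,s₀), y₀ = y(t₀,s₀). Suppose that (x_t·g_s − x_s·g_t)(t₀,s₀) = 0 and (y_t·g_s − y_s·g_t)(t₀,s₀) = 0, where x_t, x_s, y_t, y_s are the partial derivatives of the rational functions x and y, g_t = −p′(t) and g_s = 2s. Then (t − t₀)² divides Ξ1(t, x₀) in ℝ[t] and (t − t₀)² divides Ξ2(t, x₀, y₀) in ℝ[t]. -/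
open Polynomial

/-- Partial derivative with respect to `t` of `(a1(t) + s·a2(t))/(b1(t) + s·b2(t))`. -/
noncomputable def ratPartialT (a1 a2 b1 b2 : Polynomial ℝ) (t s : ℝ) : ℝ :=
  ((a1.derivative.eval t + s * a2.derivative.eval t) * (b1.eval t + s * b2.eval t) -
      (a1.eval t + s * a2.eval t) * (b1.derivative.eval t + s * b2.derivative.eval t)) /
    (b1.eval t + s * b2.eval t) ^ 2

/-- Partial derivative with respect to `s` of `(a1(t) + s·a2(t))/(b1(t) + s·b2(t))`. -/
noncomputable def ratPartialS (a1 a2 b1 b2 : Polynomial ℝ) (t s : ℝ) : ℝ :=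
  (a2.eval t * (b1.eval t + s * b2.eval t) -
      (a1.eval t + s * a2.eval t) * b2.eval t) /
    (b1.eval t + s * b2.eval t) ^ 2

/-- A polynomial with a root at `a` of both itself and its derivative is
divisible by `(X - C a) ^ 2`. -/
lemma sq_dvd_of_isRoot_of_isRoot_derivative (q : Polynomial ℝ) (a : ℝ)
    (h0 : q.eval a = 0) (h1 : q.derivative.eval a = 0) : (X - C a) ^ 2 ∣ q := by
  obtain ⟨r, hr⟩ := (dvd_iff_isRoot (p := q)).mpr h0
  have hd : q.derivative = r + (X - C a) * r.derivative := by
    rw [hr, derivative_mul, derivative_sub, derivative_X, derivative_C, sub_zero, one_mul]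
  have hra : r.eval a = 0 := by
    have := congrArg (eval a) hd
    simp at this
    rw [h1] at this
    linarith [this]
  obtain ⟨r', hr'⟩ := (dvd_iff_isRoot (p := r)).mpr hra
  exact ⟨r', by rw [hr, hr']; ring⟩

lemma key_fact (a1 a2 b1 b2 p : Polynomial ℝ) (t₀ s₀ x₀ : ℝ)
    (hB : b1.eval t₀ + s₀ * b2.eval t₀ ≠ 0)
    (hx₀ : x₀ = (a1.eval t₀ + s₀ * a2.eval t₀) / (b1.eval t₀ + s₀ * b2.eval t₀))
    (hx : ratPartialT a1 a2 b1 b2 t₀ s₀ * (2 * s₀) -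
      ratPartialS a1 a2 b1 b2 t₀ s₀ * (-(p.derivative.eval t₀)) = 0) :
    (x₀ * b1.eval t₀ - a1.eval t₀) + s₀ * (x₀ * b2.eval t₀ - a2.eval t₀) = 0 ∧
    2 * s₀ * (x₀ * b1.derivative.eval t₀ - a1.derivative.eval t₀)
      + 2 * s₀ ^ 2 * (x₀ * b2.derivative.eval t₀ - a2.derivative.eval t₀)
      + p.derivative.eval t₀ * (x₀ * b2.eval t₀ - a2.eval t₀) = 0 := by
  rw [eq_div_iff hB] at hx₀
  unfold ratPartialT ratPartialS at hx
  rw [div_mul_eq_mul_div, div_mul_eq_mul_div, div_sub_div_same,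
    div_eq_iff (pow_ne_zero 2 hB)] at hx
  constructor
  · linear_combination hx₀
  · apply mul_left_cancel₀ hB
    linear_combination (-1) * hx +
      (2 * s₀ * (b1.derivative.eval t₀ + s₀ * b2.derivative.eval t₀) +
        p.derivative.eval t₀ * b2.eval t₀) * hx₀

/-- If `(x_t·g_s − x_s·g_t)` and `(y_t·g_s − y_s·g_t)` both vanish at a point
`(t₀,s₀)` of the Weierstrass curve where `B1, B2` do not vanish, then `(t − t₀)²`
divides both `Ξ1(t,x₀)` and `Ξ2(t,x₀,y₀)` in `ℝ[t]`, where `x₀ = x(t₀,s₀)` and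
`y₀ = y(t₀,s₀)`. -/
theorem double_root_at_local_singularity
    (a11 a12 b11 b12 a21 a22 b21 b22 p : Polynomial ℝ) (hp : Squarefree p)
    (t₀ s₀ x₀ y₀ : ℝ) (hcurve : s₀ ^ 2 = p.eval t₀)
    (hB1 : b11.eval t₀ + s₀ * b12.eval t₀ ≠ 0)
    (hB2 : b21.eval t₀ + s₀ * b22.eval t₀ ≠ 0)
    (hx₀ : x₀ = (a11.eval t₀ + s₀ * a12.eval t₀) / (b11.eval t₀ + s₀ * b12.eval t₀))
    (hy₀ : y₀ = (a21.eval t₀ + s₀ * a22.eval t₀) / (b21.eval t₀ + s₀ * b22.eval t₀))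
    (hx : ratPartialT a11 a12 b11 b12 t₀ s₀ * (2 * s₀) -
      ratPartialS a11 a12 b11 b12 t₀ s₀ * (-(p.derivative.eval t₀)) = 0)
    (hy : ratPartialT a21 a22 b21 b22 t₀ s₀ * (2 * s₀) -
      ratPartialS a21 a22 b21 b22 t₀ s₀ * (-(p.derivative.eval t₀)) = 0) :
    (X - C t₀) ^ 2 ∣ Xi1Spec a11 a12 b11 b12 p x₀ ∧
      (X - C t₀) ^ 2 ∣ Xi2Spec a11 a12 b11 b12 a21 a22 b21 b22 x₀ y₀ := by
  obtain ⟨h1, h2⟩ := key_fact a11 a12 b11 b12 p t₀ s₀ x₀ hB1 hx₀ hx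
  obtain ⟨h3, h4⟩ := key_fact a21 a22 b21 b22 p t₀ s₀ y₀ hB2 hy₀ hy
  have hdp : s₀ = 0 → p.derivative.eval t₀ ≠ 0 := by
    intro hs hd
    have h0 : p.eval t₀ = 0 := by rw [← hcurve, hs]; ring
    have hsq : (X - C t₀) * (X - C t₀) ∣ p := by
      have := sq_dvd_of_isRoot_of_isRoot_derivative p t₀ h0 hd
      rwa [sq] at this
    exact Polynomial.not_isUnit_X_sub_C t₀ (hp _ hsq)
  constructor
  · apply sq_dvd_of_isRoot_of_isRoot_derivative
    · simp only [Xi1Spec, eval_sub, eval_pow, eval_mul, eval_C]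
      linear_combination
        (x₀ * b11.eval t₀ - a11.eval t₀ - s₀ * (x₀ * b12.eval t₀ - a12.eval t₀)) * h1 +
        (x₀ * b12.eval t₀ - a12.eval t₀) ^ 2 * hcurve
    · simp only [Xi1Spec, derivative_sub, derivative_pow, derivative_mul, derivative_C,
        eval_sub, eval_add, eval_mul, eval_pow, eval_C, Nat.cast_ofNat, zero_mul,
        zero_add, eval_natCast]
      linear_combination
        (2 * (x₀ * b11.derivative.eval t₀ - a11.derivative.eval t₀)) * h1 +
        (-(x₀ * b12.eval t₀ - a12.eval t₀)) * h2 +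
        (2 * (x₀ * b12.eval t₀ - a12.eval t₀) *
          (x₀ * b12.derivative.eval t₀ - a12.derivative.eval t₀)) * hcurve
  · apply sq_dvd_of_isRoot_of_isRoot_derivative
    · simp only [Xi2Spec, eval_sub, eval_add, eval_mul, eval_C]
      linear_combination
        (x₀ * b12.eval t₀ - a12.eval t₀) * h3 -
        (y₀ * b22.eval t₀ - a22.eval t₀) * h1
    · simp only [Xi2Spec, derivative_sub, derivative_add, derivative_mul, derivative_C,
        eval_sub, eval_add, eval_mul, eval_C, zero_mul, zero_add]
      rcases eq_or_ne s₀ 0 with hs | hs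
      · subst hs
        have hdp' := hdp rfl
        have hv : x₀ * b12.eval t₀ - a12.eval t₀ = 0 := by
          apply mul_left_cancel₀ hdp'; linear_combination h2
        have hw : y₀ * b22.eval t₀ - a22.eval t₀ = 0 := by
          apply mul_left_cancel₀ hdp'; linear_combination h4
        have hu : x₀ * b11.eval t₀ - a11.eval t₀ = 0 := by linear_combination h1
        have hz : y₀ * b21.eval t₀ - a21.eval t₀ = 0 := by linear_combination h3
        linear_combination
          (x₀ * b12.derivative.eval t₀ - a12.derivative.eval t₀) * hz +
          (y₀ * b21.derivative.eval t₀ - a21.derivative.eval t₀) * hv -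
          (x₀ * b11.derivative.eval t₀ - a11.derivative.eval t₀) * hw -
          (y₀ * b22.derivative.eval t₀ - a22.derivative.eval t₀) * hu
      · have h2s : (2 * s₀ : ℝ) ≠ 0 := by
          simp [hs]
        apply mul_left_cancel₀ h2s
        linear_combination
          (-2 * s₀ * (y₀ * b22.derivative.eval t₀ - a22.derivative.eval t₀)) * h1 +
          (2 * s₀ * (x₀ * b12.derivative.eval t₀ - a12.derivative.eval t₀)) * h3 +
          (-(y₀ * b22.eval t₀ - a22.eval t₀)) * h2 +
          (x₀ * b12.eval t₀ - a12.eval t₀) * h4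
end

section
/- Let p ∈ ℝ[t] be squarefree and let (t₀,s₀) ∈ ℝ² satisfy s₀² = p(t₀), B1(t₀,s₀) ≠ 0 and B2(t₀,s₀) ≠ 0, and set x₀ = x(t₀,s₀), y₀ = y(t₀,s₀). Assume that Ξ1(·, x₀) and Ξ2(·, x₀, y₀) are nonzero as univariate polynomials in ℝ[t], and that (x₀,y₀) is a singularity of the image curve in the sense that at least one of the following holds: (a) there exists (t₁,s₁) ∈ ℝ² with s₁² = p(t₁), t₁ ≠ t₀, B1(t₁,s₁) ≠ 0, B2(t₁,s₁) ≠ 0 and x(t₁,s₁) = x₀, y(t₁,s₁) = y₀; or (b) (x_t·g_s − x_s·g_t)(t₀,s₀) = 0 and (y_t·g_s − y_s·g_t)(t₀,s₀) = 0. Then the greatest common divisor of Ξ1(·, x₀) and Ξ2(·, x₀, y₀) in ℝ[t] has degree at least 2. -/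
open Polynomial

lemma aux_sq_dvd {q : Polynomial ℝ} {t : ℝ} (h0 : q.eval t = 0)
    (h1 : q.derivative.eval t = 0) : (X - C t) ^ 2 ∣ q := by
  obtain ⟨r, rfl⟩ := (dvd_iff_isRoot (a := t)).mpr h0
  have hr : r.eval t = 0 := by
    simp [derivative_mul] at h1
    simpa using h1
  obtain ⟨r2, rfl⟩ := (dvd_iff_isRoot (a := t)).mpr hr
  exact ⟨r2, by ring⟩

lemma aux_xi1_eval (a11 a12 b11 b12 p : Polynomial ℝ) (t s x₀ : ℝ)
    (hcurve : s ^ 2 = p.eval t)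
    (hA : a11.eval t + s * a12.eval t = x₀ * (b11.eval t + s * b12.eval t)) :
    (Xi1Spec a11 a12 b11 b12 p x₀).eval t = 0 := by
  simp only [Xi1Spec, eval_sub, eval_pow, eval_mul, eval_C]
  linear_combination ((x₀ * b11.eval t - a11.eval t) - s * (x₀ * b12.eval t - a12.eval t)) *
      (by linarith : x₀ * b11.eval t - a11.eval t + s * (x₀ * b12.eval t - a12.eval t) = 0) +
    (x₀ * b12.eval t - a12.eval t) ^ 2 * hcurve

lemma aux_xi2_eval (a11 a12 b11 b12 a21 a22 b21 b22 : Polynomial ℝ) (t s x₀ y₀ : ℝ)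
    (hA1 : a11.eval t + s * a12.eval t = x₀ * (b11.eval t + s * b12.eval t))
    (hA2 : a21.eval t + s * a22.eval t = y₀ * (b21.eval t + s * b22.eval t)) :
    (Xi2Spec a11 a12 b11 b12 a21 a22 b21 b22 x₀ y₀).eval t = 0 := by
  simp only [Xi2Spec, eval_sub, eval_add, eval_mul, eval_C]
  linear_combination (x₀ * b12.eval t - a12.eval t) *
      (by linarith : y₀ * b21.eval t - a21.eval t + s * (y₀ * b22.eval t - a22.eval t) = 0) -
    (y₀ * b22.eval t - a22.eval t) *
      (by linarith : x₀ * b11.eval t - a11.eval t + s * (x₀ * b12.eval t - a12.eval t) = 0)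

lemma aux_tangent (a1 a2 b1 b2 p : Polynomial ℝ) (t s x : ℝ)
    (hB : b1.eval t + s * b2.eval t ≠ 0)
    (hA : a1.eval t + s * a2.eval t = x * (b1.eval t + s * b2.eval t))
    (hb : ratPartialT a1 a2 b1 b2 t s * (2 * s) -
      ratPartialS a1 a2 b1 b2 t s * (-(p.derivative.eval t)) = 0) :
    2 * s * ((x * b1.derivative.eval t - a1.derivative.eval t) +
        s * (x * b2.derivative.eval t - a2.derivative.eval t)) +
      p.derivative.eval t * (x * b2.eval t - a2.eval t) = 0 := by
  have hB2 : (b1.eval t + s * b2.eval t) ^ 2 ≠ 0 := pow_ne_zero 2 hB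
  rw [ratPartialT, ratPartialS, div_mul_eq_mul_div, div_mul_eq_mul_div, div_sub_div_same,
    _root_.div_eq_zero_iff] at hb
  replace hb := hb.resolve_right hB2
  have key : (b1.eval t + s * b2.eval t) *
      (2 * s * ((x * b1.derivative.eval t - a1.derivative.eval t) +
        s * (x * b2.derivative.eval t - a2.derivative.eval t)) +
      p.derivative.eval t * (x * b2.eval t - a2.eval t)) = 0 := by
    linear_combination (-1) * hb -
      (2 * s * b1.derivative.eval t + 2 * s ^ 2 * b2.derivative.eval t +
        p.derivative.eval t * b2.eval t) * hA
  exact (mul_eq_zero.mp key).resolve_left hB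

lemma aux_xi1_deriv (a1 a2 b1 b2 p : Polynomial ℝ) (t s x : ℝ)
    (hcurve : s ^ 2 = p.eval t)
    (hA : a1.eval t + s * a2.eval t = x * (b1.eval t + s * b2.eval t))
    (hx2 : 2 * s * ((x * b1.derivative.eval t - a1.derivative.eval t) +
        s * (x * b2.derivative.eval t - a2.derivative.eval t)) +
      p.derivative.eval t * (x * b2.eval t - a2.eval t) = 0) :
    (Xi1Spec a1 a2 b1 b2 p x).derivative.eval t = 0 := by
  simp only [Xi1Spec, derivative_sub, derivative_mul, derivative_pow, derivative_C,
    eval_add, eval_sub, eval_mul, eval_pow, eval_C, eval_natCast, zero_mul, add_zero, zero_add,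
    Nat.cast_ofNat, pow_one, Nat.sub_self]
  linear_combination (-(x * b2.eval t - a2.eval t)) * hx2 -
    2 * (x * b1.derivative.eval t - a1.derivative.eval t) * hA +
    2 * (x * b2.eval t - a2.eval t) * (x * b2.derivative.eval t - a2.derivative.eval t) * hcurve

lemma aux_xi2_deriv (a11 a12 b11 b12 a21 a22 b21 b22 p : Polynomial ℝ)
    (hp : Squarefree p) (t s x y : ℝ)
    (hcurve : s ^ 2 = p.eval t)
    (hA1 : a11.eval t + s * a12.eval t = x * (b11.eval t + s * b12.eval t))
    (hA2 : a21.eval t + s * a22.eval t = y * (b21.eval t + s * b22.eval t))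
    (hx2 : 2 * s * ((x * b11.derivative.eval t - a11.derivative.eval t) +
        s * (x * b12.derivative.eval t - a12.derivative.eval t)) +
      p.derivative.eval t * (x * b12.eval t - a12.eval t) = 0)
    (hy2 : 2 * s * ((y * b21.derivative.eval t - a21.derivative.eval t) +
        s * (y * b22.derivative.eval t - a22.derivative.eval t)) +
      p.derivative.eval t * (y * b22.eval t - a22.eval t) = 0) :
    (Xi2Spec a11 a12 b11 b12 a21 a22 b21 b22 x y).derivative.eval t = 0 := by
  by_cases hs : s = 0
  · subst hs
    have hp0 : p.eval t = 0 := by simpa using hcurve.symm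
    have hsep : IsCoprime p p.derivative := PerfectField.separable_iff_squarefree.mpr hp
    obtain ⟨u, v, huv⟩ := hsep
    have hpd : p.derivative.eval t ≠ 0 := by
      intro h
      have := congrArg (Polynomial.eval t) huv
      simp [hp0, h] at this
    have hv1 : x * b12.eval t - a12.eval t = 0 := by
      have h' : p.derivative.eval t * (x * b12.eval t - a12.eval t) = 0 := by
        linear_combination hx2
      exact (mul_eq_zero.mp h').resolve_left hpd
    have hv2 : y * b22.eval t - a22.eval t = 0 := by
      have h' : p.derivative.eval t * (y * b22.eval t - a22.eval t) = 0 := by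
        linear_combination hy2
      exact (mul_eq_zero.mp h').resolve_left hpd
    have hu1 : x * b11.eval t - a11.eval t = 0 := by linear_combination (-1) * hA1
    have hu2 : y * b21.eval t - a21.eval t = 0 := by linear_combination (-1) * hA2
    simp only [Xi2Spec, derivative_sub, derivative_add, derivative_mul, derivative_C,
      eval_add, eval_sub, eval_mul, eval_C, zero_mul, add_zero, zero_add]
    linear_combination (x * b12.derivative.eval t - a12.derivative.eval t) * hu2 +
      (y * b21.derivative.eval t - a21.derivative.eval t) * hv1 -
      (x * b11.derivative.eval t - a11.derivative.eval t) * hv2 -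
      (y * b22.derivative.eval t - a22.derivative.eval t) * hu1
  · have key : (2 * s) * ((Xi2Spec a11 a12 b11 b12 a21 a22 b21 b22 x y).derivative.eval t) = 0 := by
      simp only [Xi2Spec, derivative_sub, derivative_add, derivative_mul, derivative_C,
        eval_add, eval_sub, eval_mul, eval_C, zero_mul, add_zero, zero_add]
      linear_combination (x * b12.eval t - a12.eval t) * hy2 -
        (y * b22.eval t - a22.eval t) * hx2 -
        2 * s * (x * b12.derivative.eval t - a12.derivative.eval t) * hA2 +
        2 * s * (y * b22.derivative.eval t - a22.derivative.eval t) * hA1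
    exact (mul_eq_zero.mp key).resolve_left (mul_ne_zero two_ne_zero hs)
/-- Every singularity of the image curve — a self-intersection (a) or a point where
both `(x_t·g_s − x_s·g_t)` and `(y_t·g_s − y_s·g_t)` vanish (b) — makes the gcd of the
specialized polynomials `Ξ1(·,x₀)` and `Ξ2(·,x₀,y₀)` have degree at least 2
(equivalently, the first principal subresultant `sres₁(x₀,y₀)` vanishes). -/
theorem singularity_gcd_degree
    (a11 a12 b11 b12 a21 a22 b21 b22 p : Polynomial ℝ) (hp : Squarefree p)
    (t₀ s₀ x₀ y₀ : ℝ) (hcurve : s₀ ^ 2 = p.eval t₀)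
    (hB1 : b11.eval t₀ + s₀ * b12.eval t₀ ≠ 0)
    (hB2 : b21.eval t₀ + s₀ * b22.eval t₀ ≠ 0)
    (hx₀ : x₀ = (a11.eval t₀ + s₀ * a12.eval t₀) / (b11.eval t₀ + s₀ * b12.eval t₀))
    (hy₀ : y₀ = (a21.eval t₀ + s₀ * a22.eval t₀) / (b21.eval t₀ + s₀ * b22.eval t₀))
    (hne1 : Xi1Spec a11 a12 b11 b12 p x₀ ≠ 0)
    (hne2 : Xi2Spec a11 a12 b11 b12 a21 a22 b21 b22 x₀ y₀ ≠ 0)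
    (hsing :
      (∃ t₁ s₁ : ℝ, s₁ ^ 2 = p.eval t₁ ∧ t₁ ≠ t₀ ∧
        b11.eval t₁ + s₁ * b12.eval t₁ ≠ 0 ∧
        b21.eval t₁ + s₁ * b22.eval t₁ ≠ 0 ∧
        (a11.eval t₁ + s₁ * a12.eval t₁) / (b11.eval t₁ + s₁ * b12.eval t₁) = x₀ ∧
        (a21.eval t₁ + s₁ * a22.eval t₁) / (b21.eval t₁ + s₁ * b22.eval t₁) = y₀) ∨
      (ratPartialT a11 a12 b11 b12 t₀ s₀ * (2 * s₀) -
          ratPartialS a11 a12 b11 b12 t₀ s₀ * (-(p.derivative.eval t₀)) = 0 ∧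
        ratPartialT a21 a22 b21 b22 t₀ s₀ * (2 * s₀) -
          ratPartialS a21 a22 b21 b22 t₀ s₀ * (-(p.derivative.eval t₀)) = 0)) :
    2 ≤ (EuclideanDomain.gcd (Xi1Spec a11 a12 b11 b12 p x₀)
          (Xi2Spec a11 a12 b11 b12 a21 a22 b21 b22 x₀ y₀)).natDegree := by

  have hA1 : a11.eval t₀ + s₀ * a12.eval t₀ = x₀ * (b11.eval t₀ + s₀ * b12.eval t₀) :=
    (div_eq_iff hB1).mp hx₀.symm
  have hA2 : a21.eval t₀ + s₀ * a22.eval t₀ = y₀ * (b21.eval t₀ + s₀ * b22.eval t₀) :=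
    (div_eq_iff hB2).mp hy₀.symm
  have h10 : (Xi1Spec a11 a12 b11 b12 p x₀).eval t₀ = 0 :=
    aux_xi1_eval a11 a12 b11 b12 p t₀ s₀ x₀ hcurve hA1
  have h20 : (Xi2Spec a11 a12 b11 b12 a21 a22 b21 b22 x₀ y₀).eval t₀ = 0 :=
    aux_xi2_eval a11 a12 b11 b12 a21 a22 b21 b22 t₀ s₀ x₀ y₀ hA1 hA2
  have hgne : EuclideanDomain.gcd (Xi1Spec a11 a12 b11 b12 p x₀)
      (Xi2Spec a11 a12 b11 b12 a21 a22 b21 b22 x₀ y₀) ≠ 0 := fun h =>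
    hne1 (EuclideanDomain.gcd_eq_zero_iff.mp h).1
  rcases hsing with ⟨t₁, s₁, hc1, ht, hb1, hb2, hx1, hy1⟩ | ⟨hbx, hby⟩
  · have hA1' : a11.eval t₁ + s₁ * a12.eval t₁ = x₀ * (b11.eval t₁ + s₁ * b12.eval t₁) :=
      (div_eq_iff hb1).mp hx1
    have hA2' : a21.eval t₁ + s₁ * a22.eval t₁ = y₀ * (b21.eval t₁ + s₁ * b22.eval t₁) :=
      (div_eq_iff hb2).mp hy1
    have h11 : (Xi1Spec a11 a12 b11 b12 p x₀).eval t₁ = 0 :=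
      aux_xi1_eval a11 a12 b11 b12 p t₁ s₁ x₀ hc1 hA1'
    have h21 : (Xi2Spec a11 a12 b11 b12 a21 a22 b21 b22 x₀ y₀).eval t₁ = 0 :=
      aux_xi2_eval a11 a12 b11 b12 a21 a22 b21 b22 t₁ s₁ x₀ y₀ hA1' hA2'
    have hcop : IsCoprime (X - C t₀) (X - C t₁) :=
      isCoprime_X_sub_C_of_isUnit_sub (isUnit_iff_ne_zero.mpr (sub_ne_zero.mpr ht.symm))
    have d1 : (X - C t₀) * (X - C t₁) ∣ Xi1Spec a11 a12 b11 b12 p x₀ :=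
      hcop.mul_dvd (dvd_iff_isRoot.mpr h10) (dvd_iff_isRoot.mpr h11)
    have d2 : (X - C t₀) * (X - C t₁) ∣ Xi2Spec a11 a12 b11 b12 a21 a22 b21 b22 x₀ y₀ :=
      hcop.mul_dvd (dvd_iff_isRoot.mpr h20) (dvd_iff_isRoot.mpr h21)
    have hdeg := Polynomial.natDegree_le_of_dvd (EuclideanDomain.dvd_gcd d1 d2) hgne
    have h2 : ((X - C t₀) * (X - C t₁)).natDegree = 2 := by
      rw [natDegree_mul (X_sub_C_ne_zero t₀) (X_sub_C_ne_zero t₁), natDegree_X_sub_C,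
        natDegree_X_sub_C]
    omega
  · have hx2 := aux_tangent a11 a12 b11 b12 p t₀ s₀ x₀ hB1 hA1 hbx
    have hy2 := aux_tangent a21 a22 b21 b22 p t₀ s₀ y₀ hB2 hA2 hby
    have h1d := aux_xi1_deriv a11 a12 b11 b12 p t₀ s₀ x₀ hcurve hA1 hx2
    have h2d := aux_xi2_deriv a11 a12 b11 b12 a21 a22 b21 b22 p hp t₀ s₀ x₀ y₀ hcurve hA1 hA2
      hx2 hy2
    have d1 := aux_sq_dvd h10 h1d
    have d2 := aux_sq_dvd h20 h2d
    have hdeg := Polynomial.natDegree_le_of_dvd (EuclideanDomain.dvd_gcd d1 d2) hgne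
    have h2 : ((X - C t₀) ^ 2).natDegree = 2 := by
      rw [natDegree_pow, natDegree_X_sub_C]
    omega
end

section
/- Let p ∈ ℝ[t] be squarefree with p(t₀) = 0, and let a11, a12, b11, b12 ∈ ℝ[t] with a11(t₀) = 0, b11(t₀) = 0 and b12(t₀) ≠ 0. Then, as t tends to t₀ within the set { t ∈ ℝ : t ≠ t₀ and p(t) > 0 }, the function t ↦ (a11(t) + √(p(t))·a12(t)) / (b11(t) + √(p(t))·b12(t)) tends to the finite limit a12(t₀)/b12(t₀). (In the paper's terms: at a base point of the map lying at a ramification point of the Weierstrass curve, the component x(t, √(p(t))) extends continuously with value a12(t₀)/b12(t₀) whenever b12(t₀) ≠ 0.) -/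
/-!
Dividing numerator and denominator by `√p` reduces the claim to `a11 / √p → 0` and
`b11 / √p → 0`. Write `q / √p = (q / p) · √p`: since `p` is squarefree, `t₀` is a simple root,
so `p'(t₀) ≠ 0` and l'Hôpital gives `q / p → q'(t₀) / p'(t₀)` for any `q` vanishing at `t₀`,
while `√p → 0`.
-/

open Polynomial Filter Topology

/-- Holds for every `y` thanks to the junk values `√y = 0` and `x / 0 = 0` when `y ≤ 0`. -/
theorem Real.div_sqrt_eq_div_mul_sqrt (x y : ℝ) : x / √y = x / y * √y := by
  rcases le_or_gt y 0 with hy | hy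
  · simp [Real.sqrt_eq_zero'.mpr hy]
  · rw [div_mul_eq_mul_div, div_eq_div_iff (by positivity) hy.ne', mul_assoc,
      Real.mul_self_sqrt hy.le]

theorem Filter.Tendsto.div_sqrt_of_tendsto_div {α : Type*} {l : Filter α} {f g : α → ℝ} {c : ℝ}
    (hfg : Tendsto (fun x => f x / g x) l (𝓝 c)) (hg : Tendsto g l (𝓝 0)) :
    Tendsto (fun x => f x / √(g x)) l (𝓝 0) := by
  simpa [Real.div_sqrt_eq_div_mul_sqrt] using hfg.mul (Real.continuous_sqrt.tendsto 0 |>.comp hg)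

theorem Polynomial.eval_derivative_ne_zero_of_squarefree {K : Type*} [Field K] [PerfectField K]
    {p : K[X]} (hp : Squarefree p) {a : K} (ha : p.eval a = 0) : p.derivative.eval a ≠ 0 :=
  (PerfectField.separable_iff_squarefree.mpr hp).eval₂_derivative_ne_zero (RingHom.id K) ha

theorem Polynomial.tendsto_eval_div_eval_of_isRoot {p q : ℝ[X]} {a : ℝ} (hp : p.eval a = 0)
    (hq : q.eval a = 0) (hp' : p.derivative.eval a ≠ 0) :
    Tendsto (fun t => q.eval t / p.eval t) (𝓝[≠] a)
      (𝓝 (q.derivative.eval a / p.derivative.eval a)) := by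
  refine HasDerivAt.lhopital_zero_nhds (.of_forall fun t => q.hasDerivAt t)
    (.of_forall fun t => p.hasDerivAt t) ?_ ?_ ?_ ?_
  · exact p.derivative.continuous.continuousAt.eventually_ne hp'
  · simpa [hq] using q.continuous.tendsto a
  · simpa [hp] using p.continuous.tendsto a
  · exact (q.derivative.continuous.tendsto a).div (p.derivative.continuous.tendsto a) hp'

/-- At a base point `(t₀,0)` of the map lying at a ramification point of the
Weierstrass curve (i.e. `p(t₀) = 0`, `a11(t₀) = b11(t₀) = 0`) with `b12(t₀) ≠ 0`,
the component `x(t,√(p(t)))` extends continuously with finite limit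
`a12(t₀)/b12(t₀)` as `t → t₀` within `{t ≠ t₀ : p(t) > 0}`. -/
theorem base_point_finite_limit (p a11 a12 b11 b12 : Polynomial ℝ)
    (hp : Squarefree p) (t₀ : ℝ) (hpt₀ : p.eval t₀ = 0)
    (ha11 : a11.eval t₀ = 0) (hb11 : b11.eval t₀ = 0) (hb12 : b12.eval t₀ ≠ 0) :
    Tendsto (fun t : ℝ =>
        (a11.eval t + Real.sqrt (p.eval t) * a12.eval t) /
          (b11.eval t + Real.sqrt (p.eval t) * b12.eval t))
      (nhdsWithin t₀ {t : ℝ | t ≠ t₀ ∧ 0 < p.eval t})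
      (nhds (a12.eval t₀ / b12.eval t₀)) := by
  set l := nhdsWithin t₀ {t : ℝ | t ≠ t₀ ∧ 0 < p.eval t}
  have hl : l ≤ 𝓝[≠] t₀ := nhdsWithin_mono _ fun t ht => ht.1
  have heval (q : ℝ[X]) : Tendsto (fun t => q.eval t) l (𝓝 (q.eval t₀)) :=
    (q.continuous.tendsto t₀).mono_left nhdsWithin_le_nhds
  have hp' := eval_derivative_ne_zero_of_squarefree hp hpt₀
  have hdiv_sqrt {q : ℝ[X]} (hq : q.eval t₀ = 0) :
      Tendsto (fun t => q.eval t / √(p.eval t)) l (𝓝 0) :=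
    ((tendsto_eval_div_eval_of_isRoot hpt₀ hq hp').mono_left hl).div_sqrt_of_tendsto_div
      (hpt₀ ▸ heval p)
  have hlim := ((hdiv_sqrt ha11).add (heval a12)).div ((hdiv_sqrt hb11).add (heval b12))
    (by simpa using hb12)
  rw [zero_add, zero_add] at hlim
  refine hlim.congr' ?_
  filter_upwards [self_mem_nhdsWithin] with t ht
  have hsqrt : √(p.eval t) ≠ 0 := (Real.sqrt_pos.mpr ht.2).ne'
  simp only [Pi.div_apply]
  field_simp
end

section
/- Let p ∈ ℝ[t] be squarefree with deg p ≥ 1 and p(t₀) = 0, and let a11, a12, b11, b12 ∈ ℝ[t] with a11(t₀) = 0, b11(t₀) = 0, b12(t₀) = 0, a12(t₀) ≠ 0, and (b11, b12) ≠ (0,0). Then, as t tends to t₀ within the set { t ∈ ℝ : t ≠ t₀, p(t) > 0 and b11(t) + √(p(t))·b12(t) ≠ 0 }, the absolute value of the function t ↦ (a11(t) + √(p(t))·a12(t)) / (b11(t) + √(p(t))·b12(t)) tends to +∞. (In the paper's terms: at a base point of the map lying at a ramification point of the Weierstrass curve, the branch of the image curve goes to infinity whenever b12(t₀) = 0.)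 -/
open Polynomial Filter Topology

set_option maxHeartbeats 1000000 in
/-- At a base point `(t₀,0)` of the map lying at a ramification point of the
Weierstrass curve (i.e. `p(t₀) = 0`, `a11(t₀) = b11(t₀) = 0`), if moreover
`b12(t₀) = 0` and `a12(t₀) ≠ 0` (and `(b11,b12) ≠ (0,0)`), then the branch of the
image curve goes to infinity: `|x(t,√(p(t)))| → +∞` as `t → t₀` within the set where
`t ≠ t₀`, `p(t) > 0` and the denominator does not vanish. -/
theorem base_point_infinite_branch (p a11 a12 b11 b12 : Polynomial ℝ)
    (hp : Squarefree p) (hdeg : 1 ≤ p.natDegree) (t₀ : ℝ) (hpt₀ : p.eval t₀ = 0)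
    (ha11 : a11.eval t₀ = 0) (hb11 : b11.eval t₀ = 0) (hb12 : b12.eval t₀ = 0)
    (ha12 : a12.eval t₀ ≠ 0) (hb : ¬(b11 = 0 ∧ b12 = 0)) :
    Tendsto (fun t : ℝ =>
        |(a11.eval t + Real.sqrt (p.eval t) * a12.eval t) /
          (b11.eval t + Real.sqrt (p.eval t) * b12.eval t)|)
      (nhdsWithin t₀ {t : ℝ | t ≠ t₀ ∧ 0 < p.eval t ∧
        b11.eval t + Real.sqrt (p.eval t) * b12.eval t ≠ 0})
      atTop := by
  obtain ⟨q, hq⟩ := dvd_iff_isRoot.mpr hpt₀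
  obtain ⟨α, hα⟩ := dvd_iff_isRoot.mpr ha11
  obtain ⟨β, hβ⟩ := dvd_iff_isRoot.mpr hb11
  obtain ⟨γ, hγ⟩ := dvd_iff_isRoot.mpr hb12
  have hqt₀ : q.eval t₀ ≠ 0 := by
    intro h
    obtain ⟨r, hr⟩ := dvd_iff_isRoot.mpr h
    exact Polynomial.not_isUnit_X_sub_C (R := ℝ) t₀
      (hp (X - C t₀) ⟨r, by rw [hq, hr]; ring⟩)
  set ca := |a12.eval t₀| with hca_def
  have hcapos : 0 < ca := abs_pos.mpr ha12
  set cq := |q.eval t₀| with hcq_def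
  have hcqpos : 0 < cq := abs_pos.mpr hqt₀
  set A := |α.eval t₀| + 1 with hA_def
  set B := |β.eval t₀| + 1 with hB_def
  set G := |γ.eval t₀| + 1 with hG_def
  have hApos : 0 < A := by rw [hA_def]; positivity
  have hBpos : 0 < B := by rw [hB_def]; positivity
  have hGpos : 0 < G := by rw [hG_def]; positivity
  have hBGpos : 0 < B + G := by linarith
  set u : ℝ → ℝ := fun t => Real.sqrt (p.eval t) with hu_def
  set S : Set ℝ := {t : ℝ | t ≠ t₀ ∧ 0 < p.eval t ∧
      b11.eval t + Real.sqrt (p.eval t) * b12.eval t ≠ 0} with hS_def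
  set L := nhdsWithin t₀ S with hL_def
  set K := ca * cq / (8 * (B + G)) with hK_def
  have hKpos : 0 < K := by rw [hK_def]; positivity
  -- continuity facts
  have hcont : ∀ r : Polynomial ℝ, Tendsto (fun t => r.eval t) (𝓝 t₀) (𝓝 (r.eval t₀)) :=
    fun r => (Polynomial.continuous r).tendsto t₀
  have habs : ∀ r : Polynomial ℝ, Tendsto (fun t => |r.eval t|) (𝓝 t₀) (𝓝 (|r.eval t₀|)) :=
    fun r => (continuous_abs.tendsto _).comp (hcont r)
  have hLle : L ≤ 𝓝 t₀ := nhdsWithin_le_nhds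
  -- eventual bounds
  have hαb : ∀ᶠ t in L, |α.eval t| ≤ A :=
    ((habs α).eventually (eventually_le_nhds (by rw [hA_def]; linarith))).filter_mono hLle
  have hβb : ∀ᶠ t in L, |β.eval t| ≤ B :=
    ((habs β).eventually (eventually_le_nhds (by rw [hB_def]; linarith))).filter_mono hLle
  have hγb : ∀ᶠ t in L, |γ.eval t| ≤ G :=
    ((habs γ).eventually (eventually_le_nhds (by rw [hG_def]; linarith))).filter_mono hLle
  have ha12b : ∀ᶠ t in L, ca / 2 ≤ |a12.eval t| :=
    ((habs a12).eventually (eventually_ge_nhds (by linarith))).filter_mono hLle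
  have hqb : ∀ᶠ t in L, cq / 2 ≤ |q.eval t| :=
    ((habs q).eventually (eventually_ge_nhds (by linarith))).filter_mono hLle
  have hu0 : Tendsto u (𝓝 t₀) (𝓝 0) := by
    have h : Tendsto u (𝓝 t₀) (𝓝 (Real.sqrt (p.eval t₀))) :=
      (Real.continuous_sqrt.tendsto _).comp (hcont p)
    simpa [hpt₀] using h
  have hub1 : ∀ᶠ t in L, u t ≤ 1 :=
    (hu0.eventually (eventually_le_nhds (by norm_num))).filter_mono hLle
  have hub2 : ∀ᶠ t in L, u t ≤ ca * cq / (8 * A) :=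
    (hu0.eventually (eventually_le_nhds (by positivity))).filter_mono hLle
  have hmem : ∀ᶠ t in L, t ∈ S := eventually_mem_nhdsWithin
  -- main pointwise bound
  have hbound : ∀ᶠ t in L,
      K / u t ≤ |(a11.eval t + Real.sqrt (p.eval t) * a12.eval t) /
          (b11.eval t + Real.sqrt (p.eval t) * b12.eval t)| := by
    filter_upwards [hαb, hβb, hγb, ha12b, hqb, hub1, hub2, hmem] with t h1 h2 h3 h4 h5 h6 h7 hmemt
    obtain ⟨hne, hppos, hgne⟩ := hmemt
    have hupos : 0 < u t := Real.sqrt_pos.mpr hppos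
    have husq : u t * u t = p.eval t := Real.mul_self_sqrt hppos.le
    have hpeval : p.eval t = (t - t₀) * q.eval t := by
      rw [hq]; simp
    have ha11eval : a11.eval t = (t - t₀) * α.eval t := by rw [hα]; simp
    have hb11eval : b11.eval t = (t - t₀) * β.eval t := by rw [hβ]; simp
    have hb12eval : b12.eval t = (t - t₀) * γ.eval t := by rw [hγ]; simp
    have hqtne : q.eval t ≠ 0 := by
      intro h; rw [hpeval, h, mul_zero] at hppos; exact lt_irrefl 0 hppos
    have habs_t : |t - t₀| * |q.eval t| = u t * u t := by
      rw [← abs_mul, ← hpeval, abs_of_pos hppos]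
      exact husq.symm
    have htt : |t - t₀| ≤ 2 * (u t * u t) / cq := by
      have h1' : |t - t₀| = u t * u t / |q.eval t| := by
        rw [eq_div_iff (abs_ne_zero.mpr hqtne)]
        exact habs_t
      rw [h1', div_le_div_iff₀ (abs_pos.mpr hqtne) hcqpos]
      nlinarith [mul_nonneg hupos.le hupos.le, abs_nonneg (q.eval t)]
    have hsqabs : |Real.sqrt (p.eval t)| = u t := abs_of_pos hupos
    -- numerator lower bound
    have hfnum : u t * ca / 4 ≤ |a11.eval t + Real.sqrt (p.eval t) * a12.eval t| := by
      have h0 : |Real.sqrt (p.eval t)| * |a12.eval t| - |a11.eval t| ≤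
          |a11.eval t + Real.sqrt (p.eval t) * a12.eval t| := by
        have h := abs_sub_abs_le_abs_sub (Real.sqrt (p.eval t) * a12.eval t) (-(a11.eval t))
        rw [abs_neg, sub_neg_eq_add, abs_mul, add_comm] at h
        exact h
      have hnum1 : u t * (ca / 2) ≤ |Real.sqrt (p.eval t)| * |a12.eval t| := by
        rw [hsqabs]
        exact mul_le_mul_of_nonneg_left h4 hupos.le
      have hnum2 : |a11.eval t| ≤ 2 * (u t * u t) / cq * A := by
        rw [ha11eval, abs_mul]
        exact mul_le_mul htt h1 (abs_nonneg _) (by positivity)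
      have hnum3 : 2 * (u t * u t) / cq * A ≤ u t * (ca / 4) := by
        have hstep : u t * A * (2 / cq) ≤ ca * cq / (8 * A) * A * (2 / cq) := by
          apply mul_le_mul_of_nonneg_right _ (by positivity)
          exact mul_le_mul_of_nonneg_right h7 hApos.le
        calc 2 * (u t * u t) / cq * A = u t * (u t * A * (2 / cq)) := by ring
          _ ≤ u t * (ca * cq / (8 * A) * A * (2 / cq)) :=
              mul_le_mul_of_nonneg_left hstep hupos.le
          _ = u t * (ca / 4) := by
              field_simp [hApos.ne', hcqpos.ne']
              ring
      calc u t * ca / 4 = u t * (ca / 2) - u t * (ca / 4) := by ring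
        _ ≤ |Real.sqrt (p.eval t)| * |a12.eval t| - |a11.eval t| := by linarith
        _ ≤ _ := h0
    -- denominator upper bound
    have hgden : |b11.eval t + Real.sqrt (p.eval t) * b12.eval t| ≤
        2 * (u t * u t) / cq * (B + G) := by
      have h0 : |b11.eval t + Real.sqrt (p.eval t) * b12.eval t| ≤
          |b11.eval t| + |Real.sqrt (p.eval t)| * |b12.eval t| := by
        calc _ ≤ |b11.eval t| + |Real.sqrt (p.eval t) * b12.eval t| := abs_add_le _ _
          _ = _ := by rw [abs_mul]
      have h1' : |b11.eval t| ≤ 2 * (u t * u t) / cq * B := by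
        rw [hb11eval, abs_mul]
        exact mul_le_mul htt h2 (abs_nonneg _) (by positivity)
      have h2' : |Real.sqrt (p.eval t)| * |b12.eval t| ≤ 2 * (u t * u t) / cq * G := by
        rw [hsqabs, hb12eval, abs_mul]
        calc u t * (|t - t₀| * |γ.eval t|) ≤ 1 * (|t - t₀| * |γ.eval t|) :=
              mul_le_mul_of_nonneg_right h6 (by positivity)
          _ = |t - t₀| * |γ.eval t| := by ring
          _ ≤ 2 * (u t * u t) / cq * G := mul_le_mul htt h3 (abs_nonneg _) (by positivity)
      calc _ ≤ |b11.eval t| + |Real.sqrt (p.eval t)| * |b12.eval t| := h0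
        _ ≤ 2 * (u t * u t) / cq * B + 2 * (u t * u t) / cq * G := add_le_add h1' h2'
        _ = 2 * (u t * u t) / cq * (B + G) := by ring
    rw [abs_div]
    have hden_pos : 0 < |b11.eval t + Real.sqrt (p.eval t) * b12.eval t| := abs_pos.mpr hgne
    have key : u t * ca / 4 / (2 * (u t * u t) / cq * (B + G)) ≤
        |a11.eval t + Real.sqrt (p.eval t) * a12.eval t| /
          |b11.eval t + Real.sqrt (p.eval t) * b12.eval t| :=
      div_le_div₀ (abs_nonneg _) hfnum hden_pos hgden
    have hkey_eq : u t * ca / 4 / (2 * (u t * u t) / cq * (B + G)) = K / u t := by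
      rw [hK_def]
      field_simp
      ring
    rw [← hkey_eq]
    exact key
  -- K / u → atTop
  have huL : Tendsto u L (𝓝[>] (0:ℝ)) := by
    rw [tendsto_nhdsWithin_iff]
    constructor
    · exact hu0.mono_left hLle
    · filter_upwards [hmem] with t ht
      exact Real.sqrt_pos.mpr ht.2.1
  have hinv : Tendsto (fun t => (u t)⁻¹) L atTop :=
    tendsto_inv_nhdsGT_zero.comp huL
  have hKdiv : Tendsto (fun t => K / u t) L atTop := by
    simp only [div_eq_mul_inv]
    exact hinv.const_mul_atTop hKpos
  exact tendsto_atTop_mono' L hbound hKdiv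
end
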